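/- arXiv:1501.00072 — 2 statements merged into one kernel-verified Lean document; each statement's English description precedes it below -/
import Mathlib

section
/- Let F*A be a twisted group algebra of a finitely generated free abelian group A over a field F, and suppose the center of F*A is exactly F. Let C be a subgroup of A which contains a subgroup C₀ of finite index such that F*C₀ is commutative. If M is a nonzero finitely generated F*A-module which is finitely generated as an F*C-module, then M is torsion-free as an F*C-module, i.e. no nonzero element of M is annihilated by a nonzero element of F*C. -/
open Module Filter ENNReal

/-- A twisted group algebra `F*A` of the (additive) abelian group `A` over the field `F`:
the `F`-algebra `R` is free as an `F`-module with basis `{of a : a ∈ A}`, the basis elements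
multiply according to a 2-cocycle with values in `Fˣ`, and the scalars of `F` are central
(built into the `Algebra F R` structure). -/
structure TwistedGroupAlgebra (F : Type*) [Field F] (A : Type*) [AddCommGroup A]
    (R : Type*) [Ring R] [Algebra F R] where
  of : A → R
  basis : Basis A F R
  basis_eq : ∀ a : A, basis a = of a
  cocycle : A → A → Fˣ
  of_mul : ∀ a b : A, of a * of b = (cocycle a b : F) • of (a + b)
  of_zero : of 0 = 1

namespace TwistedGroupAlgebra

variable {F A R : Type*} [Field F] [AddCommGroup A] [Ring R] [Algebra F R]

/-- The subalgebra `F*C` of `F*A` determined by a subgroup `C ≤ A`, as the `F`-linear span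
of the basis elements coming from `C`. -/
def sub (T : TwistedGroupAlgebra F A R) (C : AddSubgroup A) : Submodule F R :=
  Submodule.span F (T.of '' (C : Set A))

/-- `F*C` is commutative. -/
def IsCommutativeOn (T : TwistedGroupAlgebra F A R) (C : AddSubgroup A) : Prop :=
  ∀ c₁ ∈ C, ∀ c₂ ∈ C, Commute (T.of c₁) (T.of c₂)

/-- `M` is finitely generated as an `F*C`-module: there is a finite subset `s` of `M` such that
the `F`-span of `{ c̄ • m : c ∈ C, m ∈ s }` (that is, the `F*C`-submodule generated by `s`)
is all of `M`. -/
def FGOn (T : TwistedGroupAlgebra F A R) (C : AddSubgroup A)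
    (M : Type*) [AddCommGroup M] [Module R M] [Module F M] : Prop :=
  ∃ s : Finset M, Submodule.span F {x : M | ∃ c ∈ C, ∃ m ∈ s, x = T.of c • m} = ⊤

/-- `M` is torsion-free as an `F*C`-module: no nonzero element of `M` is annihilated by a
nonzero element of `F*C`. -/
def TorsionFreeOn (T : TwistedGroupAlgebra F A R) (C : AddSubgroup A)
    (M : Type*) [AddCommGroup M] [Module R M] : Prop :=
  ∀ β ∈ T.sub C, ∀ m : M, β • m = 0 → β = 0 ∨ m = 0

/-- `M` is `F*C`-torsion: every element of `M` is annihilated by some nonzero element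
of `F*C`. -/
def IsTorsionOn (T : TwistedGroupAlgebra F A R) (C : AddSubgroup A)
    (M : Type*) [AddCommGroup M] [Module R M] : Prop :=
  ∀ m : M, ∃ β ∈ T.sub C, β ≠ 0 ∧ β • m = 0

end TwistedGroupAlgebra

/-- The Gelfand–Kirillov dimension of a module `M` over an `F`-algebra `R`: the supremum over
finite-dimensional `F`-subspaces `V ≤ R` and `W ≤ M` of `limsup_n log dim_F (Vⁿ·W) / log n`. -/
noncomputable def gkDim (F : Type*) [Field F] (R : Type*) [Ring R] [Algebra F R]
    (M : Type*) [AddCommGroup M] [Module R M] [Module F M] [IsScalarTower F R M] : ℝ≥0∞ :=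
  ⨆ (V : Submodule F R) (_ : V.FG) (W : Submodule F M) (_ : W.FG),
    Filter.limsup
      (fun n : ℕ =>
        ENNReal.ofReal
          (Real.log (Module.finrank F
            ↥(Submodule.span F (Set.image2 (· • ·) ((V ^ n : Submodule F R) : Set R) (W : Set M))))
           / Real.log n))
      Filter.atTop

/-!
`F*A` is a domain, because a free abelian group has unique sums, and it is simple: a nonzero
element of minimal support in a two-sided ideal, translated so that `0` lies in its support,
commutes with every `ā` (its commutators have smaller support), hence is a nonzero scalar.

`D = F*C₀` is a commutative Noetherian domain, `F*C` lies in the `D`-span of finitely many coset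
representatives, and `M` is finitely generated over `D`. If `βm = 0` with `0 ≠ β ∈ F*C`, the powers
of `β` are `D`-linearly dependent; cancelling powers of `β` from the lowest term of a dependence
relation yields `0 ≠ d ∈ D ∩ (F*A)β`, so `dm = 0`. The `D`-torsion of `M` is stable under every
`ā` (as `ā D = D ā`), hence an `F*A`-submodule; it is finitely generated over `D`, so some
nonzero `d ∈ D` annihilates it, and since `F*A` is simple its annihilator is everything.
-/

open scoped Pointwise IsMulCommutative

theorem Module.Free.uniqueSums_int (A : Type*) [AddCommGroup A] [Module.Free ℤ A] :
    UniqueSums A :=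
  .of_injective_addHom (Module.Free.chooseBasis ℤ A).repr.toLinearMap.toAddMonoidHom.toAddHom
    (Module.Free.chooseBasis ℤ A).repr.injective inferInstance

theorem AddSubgroup.exists_finite_subset_add {G : Type*} [AddCommGroup G] {H K : AddSubgroup G}
    (hfin : (H.addSubgroupOf K).FiniteIndex) :
    ∃ S : Set G, S.Finite ∧ (K : Set G) ⊆ (H : Set G) + S := by
  refine ⟨Set.range fun q : K ⧸ H.addSubgroupOf K => (q.out : G), Set.finite_range _, ?_⟩
  intro k hk
  obtain ⟨h, hout⟩ := QuotientAddGroup.mk_out_eq_add (H.addSubgroupOf K) ⟨k, hk⟩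
  refine ⟨-(h : G), H.neg_mem h.2, _, ⟨QuotientAddGroup.mk ⟨k, hk⟩, rfl⟩, ?_⟩
  simp [hout]

theorem exists_ne_zero_mem_span_of_sum_mul_pow_eq_zero {R : Type*} [Ring R] [NoZeroDivisors R]
    {β : R} (hβ : β ≠ 0) {s : Finset ℕ} {g : ℕ → R} (h : ∑ i ∈ s, g i * β ^ i = 0)
    (hg : ∃ i ∈ s, g i ≠ 0) : ∃ i ∈ s, g i ≠ 0 ∧ g i ∈ Ideal.span {β} := by
  classical
  set s' := s.filter (g · ≠ 0)
  have hs' : s'.Nonempty := by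
    obtain ⟨i, hi, hgi⟩ := hg
    exact ⟨i, Finset.mem_filter.mpr ⟨hi, hgi⟩⟩
  set j := s'.min' hs'
  have hj : j ∈ s' := Finset.min'_mem _ _
  have hjle (i) (hi : i ∈ s') : j ≤ i := Finset.min'_le _ _ hi
  have hsum : ∑ i ∈ s', g i * β ^ (i - j) = 0 := by
    refine (mul_eq_zero.mp ?_).resolve_right (pow_ne_zero j hβ)
    rw [Finset.sum_mul, ← h,
      ← Finset.sum_filter_of_ne (p := (g · ≠ 0)) fun i _ hi => left_ne_zero_of_mul hi]
    refine Finset.sum_congr rfl fun i hi => ?_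
    rw [mul_assoc, pow_sub_mul_pow β (hjle i hi)]
  rw [← Finset.add_sum_erase s' _ hj, Nat.sub_self, pow_zero, mul_one,
    add_eq_zero_iff_eq_neg] at hsum
  refine ⟨j, (Finset.mem_filter.mp hj).1, (Finset.mem_filter.mp hj).2, hsum ▸ ?_⟩
  refine neg_mem (Ideal.sum_mem _ fun i hi => ?_)
  obtain ⟨hij, hi⟩ := Finset.mem_erase.mp hi
  obtain ⟨k, hk⟩ : ∃ k, i - j = k + 1 :=
    Nat.exists_eq_add_one.mpr (by have := hjle i hi; omega)
  rw [hk, pow_succ, ← mul_assoc]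
  exact Ideal.mul_mem_left _ _ (Ideal.mem_span_singleton_self β)

theorem Submodule.eq_bot_of_forall_smul_eq_zero {R M : Type*} [Ring R] [IsSimpleRing R]
    [AddCommGroup M] [Module R M] (N : Submodule R M) {d : R} (hd : d ≠ 0)
    (h : ∀ x ∈ N, d • x = 0) : N = ⊥ := by
  have hone : (1 : R) ∈ Module.annihilator R N :=
    Ideal.mem_toTwoSided.mp <| IsSimpleRing.one_mem_of_ne_zero_mem _ hd <|
      Ideal.mem_toTwoSided.mpr <| Module.mem_annihilator.mpr fun x => Subtype.ext (h x x.2)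
  exact eq_bot_iff.mpr fun x hx => by
    simpa using congrArg Subtype.val (Module.mem_annihilator.mp hone ⟨x, hx⟩)

namespace TwistedGroupAlgebra

variable {F A R : Type*} [Field F] [AddCommGroup A] [Ring R] [Algebra F R]
  (T : TwistedGroupAlgebra F A R)

theorem span_range_of : Submodule.span F (Set.range T.of) = ⊤ := by
  rw [← T.basis.span_eq, show ⇑T.basis = T.of from funext T.basis_eq]

theorem induction_on {P : R → Prop} (x : R) (of : ∀ a, P (T.of a))
    (add : ∀ x y, P x → P y → P (x + y)) (smul : ∀ (c : F) x, P x → P (c • x)) :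
    P x := by
  have hx : x ∈ Submodule.span F (Set.range T.of) := T.span_range_of ▸ Submodule.mem_top
  induction hx using Submodule.span_induction with
  | mem _ h => obtain ⟨a, rfl⟩ := h; exact of a
  | zero => simpa using smul 0 _ (of 0)
  | add x y _ _ hx hy => exact add x y hx hy
  | smul c x _ hx => exact smul c x hx

theorem repr_of (a : A) : T.basis.repr (T.of a) = Finsupp.single a 1 := by
  rw [← T.basis_eq, Basis.repr_self]

theorem of_ne_zero (a : A) : T.of a ≠ 0 :=
  T.basis_eq a ▸ T.basis.ne_zero a

include T in
theorem nontrivial : Nontrivial R :=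
  ⟨⟨T.of 0, 0, T.of_ne_zero 0⟩⟩

theorem smul_of_left_injective (a : A) : Function.Injective fun c : F => c • T.of a := by
  intro c d h
  simpa [T.repr_of] using congrArg (fun x => T.basis.repr x a) h

theorem cocycle_zero_right (a : A) : (T.cocycle a 0 : F) = 1 :=
  T.smul_of_left_injective a <| by simpa [T.of_zero] using (T.of_mul a 0).symm

theorem cocycle_zero_left (a : A) : (T.cocycle 0 a : F) = 1 :=
  T.smul_of_left_injective a <| by simpa [T.of_zero] using (T.of_mul 0 a).symm

theorem repr_of_mul_apply_add (a b : A) (x : R) :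
    T.basis.repr (T.of a * x) (a + b) = T.cocycle a b * T.basis.repr x b := by
  classical
  induction x using T.induction_on with
  | of c =>
    rw [T.of_mul, map_smul, T.repr_of, T.repr_of]
    by_cases h : c = b <;> simp [h]
  | add x y hx hy => simp only [mul_add, map_add, Finsupp.add_apply, hx, hy]
  | smul c x hx =>
    simp only [mul_smul_comm, map_smul, Finsupp.smul_apply, hx, smul_eq_mul]
    ring

theorem repr_mul_of_apply_add (a b : A) (x : R) :
    T.basis.repr (x * T.of a) (b + a) = T.cocycle b a * T.basis.repr x b := by
  classical
  induction x using T.induction_on with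
  | of c =>
    rw [T.of_mul, map_smul, T.repr_of, T.repr_of]
    by_cases h : c = b <;> simp [h]
  | add x y hx hy => simp only [add_mul, map_add, Finsupp.add_apply, hx, hy, mul_add]
  | smul c x hx =>
    simp only [smul_mul_assoc, map_smul, Finsupp.smul_apply, hx, smul_eq_mul]
    ring

theorem repr_mul_apply (x y : R) (c : A) :
    T.basis.repr (x * y) c = ∑ a ∈ (T.basis.repr x).support,
      T.basis.repr x a * T.cocycle a (c - a) * T.basis.repr y (c - a) := by
  conv_lhs => rw [← T.basis.linearCombination_repr x, Finsupp.linearCombination_apply,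
    Finsupp.sum, Finset.sum_mul]
  simp only [map_sum, Finsupp.coe_finsetSum, Finset.sum_apply, smul_mul_assoc, map_smul,
    Finsupp.smul_apply, T.basis_eq, smul_eq_mul, mul_assoc]
  refine Finset.sum_congr rfl fun a _ => ?_
  rw [← T.repr_of_mul_apply_add, add_sub_cancel]

include T in
theorem noZeroDivisors [UniqueSums A] : NoZeroDivisors R := by
  refine ⟨fun {x y} hxy => ?_⟩
  by_contra! h
  obtain ⟨a₀, ha₀, b₀, hb₀, huniq⟩ := UniqueSums.uniqueAdd_of_nonempty
    (Finsupp.support_nonempty_iff.mpr ((LinearEquiv.map_ne_zero_iff T.basis.repr).mpr h.1))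
    (Finsupp.support_nonempty_iff.mpr ((LinearEquiv.map_ne_zero_iff T.basis.repr).mpr h.2))
  have key := T.repr_mul_apply x y (a₀ + b₀)
  rw [hxy, map_zero, Finsupp.zero_apply, Finset.sum_eq_single_of_mem a₀ ha₀] at key
  · rw [add_sub_cancel_left] at key
    exact mul_ne_zero (mul_ne_zero (Finsupp.mem_support_iff.mp ha₀) (Units.ne_zero _))
      (Finsupp.mem_support_iff.mp hb₀) key.symm
  · intro a ha hne
    by_cases hb : a₀ + b₀ - a ∈ (T.basis.repr y).support
    · exact absurd (huniq ha hb (add_sub_cancel a _)).1 hne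
    · rw [Finsupp.notMem_support_iff.mp hb, mul_zero]

theorem mem_center_of_forall_commute {z : R} (h : ∀ a, Commute (T.of a) z) :
    z ∈ Subalgebra.center F R := by
  rw [Subalgebra.mem_center_iff]
  intro x
  induction x using T.induction_on with
  | of a => exact (h a).eq
  | add x y hx hy => rw [add_mul, mul_add, hx, hy]
  | smul c x hx => rw [smul_mul_assoc, mul_smul_comm, hx]

theorem card_support_mul_of_le (x : R) (a : A) :
    (T.basis.repr (x * T.of a)).support.card ≤ (T.basis.repr x).support.card := by
  classical
  calc _ ≤ ((T.basis.repr x).support.image (· + a)).card := by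
        refine Finset.card_le_card fun c hc =>
          Finset.mem_image.mpr ⟨c - a, ?_, sub_add_cancel c a⟩
        rw [Finsupp.mem_support_iff] at hc ⊢
        rw [← sub_add_cancel c a, T.repr_mul_of_apply_add] at hc
        exact right_ne_zero_of_mul hc
    _ ≤ _ := Finset.card_image_le

theorem card_support_commutator_lt {z : R} (hz : T.basis.repr z 0 ≠ 0) (a : A) :
    (T.basis.repr (T.of a * z - z * T.of a)).support.card < (T.basis.repr z).support.card := by
  classical
  have hsupp : (T.basis.repr (T.of a * z - z * T.of a)).support ⊆
      ((T.basis.repr z).support.erase 0).image (a + ·) := by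
    intro c hc
    refine Finset.mem_image.mpr ⟨c - a, ?_, add_sub_cancel a c⟩
    have hc' : T.basis.repr (T.of a * z - z * T.of a) (a + (c - a)) ≠ 0 := by
      rw [add_sub_cancel]; exact Finsupp.mem_support_iff.mp hc
    rw [map_sub, Finsupp.sub_apply, T.repr_of_mul_apply_add, add_comm,
      T.repr_mul_of_apply_add, ← sub_mul] at hc'
    refine Finset.mem_erase.mpr
      ⟨fun h0 => ?_, Finsupp.mem_support_iff.mpr (right_ne_zero_of_mul hc')⟩
    rw [h0, T.cocycle_zero_left, T.cocycle_zero_right, sub_self, zero_mul] at hc'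
    exact hc' rfl
  calc _ ≤ ((T.basis.repr z).support.erase 0).card :=
        (Finset.card_le_card hsupp).trans Finset.card_image_le
    _ < _ := Finset.card_erase_lt_of_mem (Finsupp.mem_support_iff.mpr hz)

include T in
theorem one_mem_of_ne_bot (hcenter : Subalgebra.center F R = ⊥) {I : TwoSidedIdeal R}
    (hI : I ≠ ⊥) : (1 : R) ∈ I := by
  classical
  obtain ⟨x, hxI, hx0⟩ : ∃ x ∈ I, x ≠ 0 := by
    by_contra! h
    exact hI (eq_bot_iff.mpr fun x hx => h x hx)
  obtain ⟨z₁, ⟨hz₁I, hz₁0⟩, hmin⟩ :=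
    (measure fun x => (T.basis.repr x).support.card).wf.has_min
      {x | x ∈ I ∧ x ≠ 0} ⟨x, hxI, hx0⟩
  obtain ⟨a₁, ha₁⟩ := Finsupp.support_nonempty_iff.mpr
    ((LinearEquiv.map_ne_zero_iff T.basis.repr).mpr hz₁0)
  -- Translate `z₁` so that `0` lies in its support; the support does not grow.
  set z := z₁ * T.of (-a₁)
  have hz : T.basis.repr z 0 ≠ 0 := by
    rw [← add_neg_cancel a₁, T.repr_mul_of_apply_add]
    exact mul_ne_zero (Units.ne_zero _) (Finsupp.mem_support_iff.mp ha₁)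
  have hzI : z ∈ I := I.mul_mem_right _ _ hz₁I
  have hcomm (a : A) : Commute (T.of a) z := by
    by_contra hne
    refine hmin _ ⟨I.sub_mem (I.mul_mem_left _ _ hzI) (I.mul_mem_right _ _ hzI), ?_⟩
      ((T.card_support_commutator_lt hz a).trans_le (T.card_support_mul_of_le z₁ (-a₁)))
    exact sub_ne_zero.mpr hne
  obtain ⟨c, hc⟩ := Algebra.mem_bot.mp (hcenter ▸ T.mem_center_of_forall_commute hcomm)
  have hc0 : c ≠ 0 := by
    rintro rfl
    simp [hc.symm] at hz
  simpa [← hc, ← map_mul, inv_mul_cancel₀ hc0] using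
    I.mul_mem_left (algebraMap F R c⁻¹) _ hzI

include T in
theorem isSimpleRing (hcenter : Subalgebra.center F R = ⊥) : IsSimpleRing R :=
  have := T.nontrivial
  .of_eq_bot_or_eq_top fun I => or_iff_not_imp_left.mpr fun hI =>
    I.one_mem_iff.mp (T.one_mem_of_ne_bot hcenter hI)

theorem of_mem_sub {C : AddSubgroup A} {c : A} (hc : c ∈ C) : T.of c ∈ T.sub C :=
  Submodule.subset_span ⟨c, hc, rfl⟩

theorem mul_mem_sub {C : AddSubgroup A} {x y : R} (hx : x ∈ T.sub C) (hy : y ∈ T.sub C) :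
    x * y ∈ T.sub C := by
  refine (Submodule.span_mul_span F _ _).le.trans (Submodule.span_le.mpr ?_)
    (Submodule.mul_mem_mul hx hy)
  rintro _ ⟨_, ⟨a, ha, rfl⟩, _, ⟨b, hb, rfl⟩, rfl⟩
  change T.of a * T.of b ∈ T.sub C
  rw [T.of_mul]
  exact Submodule.smul_mem _ _ (T.of_mem_sub (C.add_mem ha hb))

def subalg (C : AddSubgroup A) : Subalgebra F R :=
  (T.sub C).toSubalgebra (T.of_zero ▸ T.of_mem_sub C.zero_mem)
    fun _ _ => T.mul_mem_sub

theorem of_mem_subalg {C : AddSubgroup A} {c : A} (hc : c ∈ C) : T.of c ∈ T.subalg C :=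
  T.of_mem_sub hc

theorem subalg_eq_adjoin (C : AddSubgroup A) : T.subalg C = Algebra.adjoin F (T.of '' C) :=
  le_antisymm (Algebra.span_le_adjoin F _)
    (Algebra.adjoin_le <| by rintro _ ⟨c, hc, rfl⟩; exact T.of_mem_subalg hc)

theorem isMulCommutative_subalg {C : AddSubgroup A} (hcomm : T.IsCommutativeOn C) :
    IsMulCommutative (T.subalg C) := by
  rw [subalg_eq_adjoin]
  exact Algebra.isMulCommutative_adjoin F <| by
    rintro _ ⟨a, ha, rfl⟩ _ ⟨b, hb, rfl⟩
    exact hcomm a ha b hb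

theorem of_add_mem_adjoin {a b : A} {s : Set R} (ha : T.of a ∈ Algebra.adjoin F s)
    (hb : T.of b ∈ Algebra.adjoin F s) : T.of (a + b) ∈ Algebra.adjoin F s := by
  have h := Subalgebra.smul_mem _ (Subalgebra.mul_mem _ ha hb) ((T.cocycle a b : F)⁻¹)
  rwa [T.of_mul, smul_smul, inv_mul_cancel₀ (Units.ne_zero _), one_smul] at h

theorem subalg_fg [Module.Finite ℤ A] (C : AddSubgroup A) : (T.subalg C).FG := by
  classical
  have hC : C.FG := (Submodule.fg_iff_addSubgroup_fg (AddSubgroup.toIntSubmodule C)).mp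
    (IsNoetherian.noetherian _)
  obtain ⟨S, hS⟩ := (AddSubgroup.fg_iff_addSubmonoid_fg C).mp hC
  refine ⟨S.image T.of, le_antisymm ?_ ?_⟩
  · rw [Finset.coe_image, Algebra.adjoin_le_iff]
    rintro _ ⟨s, hs, rfl⟩
    exact T.of_mem_subalg (hS ▸ AddSubmonoid.subset_closure hs : s ∈ C.toAddSubmonoid)
  · refine fun x hx => (Submodule.span_le (p := Subalgebra.toSubmodule (Algebra.adjoin F _))).mpr
      ?_ hx
    rintro _ ⟨c, hc, rfl⟩
    replace hc : c ∈ AddSubmonoid.closure (S : Set A) := hS ▸ hc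
    induction hc using AddSubmonoid.closure_induction with
    | mem s hs =>
      exact Algebra.subset_adjoin (Finset.mem_coe.mpr (Finset.mem_image_of_mem _ hs))
    | zero => rw [T.of_zero]; exact Subalgebra.one_mem _
    | add a b _ _ ha hb => exact T.of_add_mem_adjoin ha hb

theorem isNoetherianRing_subalg [Module.Finite ℤ A] (C : AddSubgroup A)
    [IsMulCommutative (T.subalg C)] : IsNoetherianRing (T.subalg C) :=
  have := (Subalgebra.fg_iff_finiteType _).mp (T.subalg_fg C)
  Algebra.FiniteType.isNoetherianRing F _

theorem exists_of_eq_mul_of {C₀ : AddSubgroup A} {S : Set A} {c : A}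
    (hc : c ∈ (C₀ : Set A) + S) :
    ∃ d ∈ T.subalg C₀, ∃ s ∈ S, T.of c = d * T.of s := by
  obtain ⟨c₀, hc₀, s, hs, rfl⟩ := hc
  refine ⟨(T.cocycle c₀ s : F)⁻¹ • T.of c₀, Subalgebra.smul_mem _ (T.of_mem_subalg hc₀) _,
    s, hs, ?_⟩
  rw [smul_mul_assoc, T.of_mul, smul_smul, inv_mul_cancel₀ (Units.ne_zero _), one_smul]

theorem sub_le_span {C C₀ : AddSubgroup A} {S : Set A}
    (hCS : (C : Set A) ⊆ (C₀ : Set A) + S) :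
    T.sub C ≤ (Submodule.span (T.subalg C₀) (T.of '' S)).restrictScalars F := by
  refine Submodule.span_le.mpr ?_
  rintro _ ⟨c, hc, rfl⟩
  obtain ⟨d, hd, s, hs, hcs⟩ := T.exists_of_eq_mul_of (hCS hc)
  rw [hcs]
  exact Submodule.smul_mem _ (⟨d, hd⟩ : T.subalg C₀) (Submodule.subset_span ⟨s, hs, rfl⟩)

theorem finite_subalg_of_fgOn {M : Type*} [AddCommGroup M] [Module R M] [Module F M]
    [IsScalarTower F R M] {C C₀ : AddSubgroup A} {S : Set A} (hS : S.Finite)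
    (hCS : (C : Set A) ⊆ C₀ + S) (hfg : T.FGOn C M) : Module.Finite (T.subalg C₀) M := by
  obtain ⟨s, hs⟩ := hfg
  refine Module.finite_def.mpr (Submodule.fg_def.mpr
    ⟨Set.image2 (fun t m => T.of t • m) S s, hS.image2 _ s.finite_toSet, eq_top_iff.mpr ?_⟩)
  rintro x -
  have hx : x ∈ Submodule.span F _ := hs.symm ▸ Submodule.mem_top
  induction hx using Submodule.span_induction with
  | mem _ h =>
    obtain ⟨c, hc, m, hm, rfl⟩ := h
    obtain ⟨d, hd, t, ht, hdt⟩ := T.exists_of_eq_mul_of (hCS hc)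
    rw [hdt, mul_smul]
    exact Submodule.smul_mem _ (⟨d, hd⟩ : T.subalg C₀)
      (Submodule.subset_span ⟨t, ht, m, hm, rfl⟩)
  | zero => exact zero_mem _
  | add x y _ _ hx hy => exact add_mem hx hy
  | smul c x _ hx =>
    rw [← algebraMap_smul R c x]
    exact Submodule.smul_mem _ (algebraMap F (T.subalg C₀) c) hx

theorem exists_of_mul_eq_mul_of {C : AddSubgroup A} {x : R} (hx : x ∈ T.subalg C) (a : A) :
    ∃ y ∈ T.subalg C, T.of a * x = y * T.of a := by
  induction hx using Submodule.span_induction with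
  | mem _ h =>
    obtain ⟨c, hc, rfl⟩ := h
    refine ⟨((T.cocycle a c : F) * (T.cocycle c a : F)⁻¹) • T.of c,
      Subalgebra.smul_mem _ (T.of_mem_subalg hc) _, ?_⟩
    rw [smul_mul_assoc, T.of_mul, T.of_mul, smul_smul, mul_assoc,
      inv_mul_cancel₀ (Units.ne_zero _), mul_one, add_comm]
  | zero => exact ⟨0, Subalgebra.zero_mem _, by simp⟩
  | add x y _ _ hx hy =>
    obtain ⟨x', hx', hx⟩ := hx
    obtain ⟨y', hy', hy⟩ := hy
    exact ⟨x' + y', Subalgebra.add_mem _ hx' hy', by rw [mul_add, add_mul, hx, hy]⟩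
  | smul c x _ hx =>
    obtain ⟨x', hx', hx⟩ := hx
    exact ⟨c • x', Subalgebra.smul_mem _ hx' c, by rw [mul_smul_comm, hx, smul_mul_assoc]⟩

section Torsion

variable {M : Type*} [AddCommGroup M] [Module R M] [NoZeroDivisors R] {C₀ : AddSubgroup A}
  [IsMulCommutative (T.subalg C₀)]

theorem mem_torsion_of_smul_eq_zero {C : AddSubgroup A} {S : Set A} (hS : S.Finite)
    (hCS : (C : Set A) ⊆ C₀ + S) {β : R} (hβ : β ∈ T.sub C) (hβ0 : β ≠ 0) {m : M}
    (hm : β • m = 0) : m ∈ Submodule.torsion (T.subalg C₀) M := by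
  have := T.nontrivial
  have : Finite (T.of '' S) := (hS.image _).to_subtype
  have hdep : ¬ LinearIndependent (T.subalg C₀) (β ^ · : ℕ → R) := fun hli =>
    Infinite.not_finite <| hli.finite_of_le_span_finite _ (T.of '' S) <| Set.range_subset_iff.mpr
      fun i => T.sub_le_span hCS (Subalgebra.pow_mem (T.subalg C) hβ i)
  obtain ⟨s, g, hsum, hg⟩ := not_linearIndependent_iff.mp hdep
  obtain ⟨j, -, hgj, hmem⟩ := exists_ne_zero_mem_span_of_sum_mul_pow_eq_zero hβ0
    (g := fun i => (g i : R)) hsum (by simpa using hg)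
  obtain ⟨r, hr⟩ := Ideal.mem_span_singleton'.mp hmem
  refine (Submodule.mem_torsion_iff m).mpr ⟨⟨g j, mem_nonZeroDivisors_of_ne_zero ?_⟩, ?_⟩
  · exact_mod_cast hgj
  · change (g j : R) • m = 0
    rw [← hr, mul_smul, hm, smul_zero]

theorem smul_mem_torsion (r : R) {x : M} (hx : x ∈ Submodule.torsion (T.subalg C₀) M) :
    r • x ∈ Submodule.torsion (T.subalg C₀) M := by
  induction r using T.induction_on with
  | of a =>
    have := T.nontrivial
    obtain ⟨d, hdx⟩ := (Submodule.mem_torsion_iff x).mp hx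
    obtain ⟨y, hy, hdy⟩ := T.exists_of_mul_eq_mul_of (d : T.subalg C₀).2 a
    have hy0 : (⟨y, hy⟩ : T.subalg C₀) ≠ 0 := fun h0 =>
      mul_ne_zero (T.of_ne_zero a) (by exact_mod_cast nonZeroDivisors.coe_ne_zero d)
        (hdy.trans (by rw [show y = 0 from congrArg Subtype.val h0, zero_mul]))
    refine (Submodule.mem_torsion_iff _).mpr ⟨⟨_, mem_nonZeroDivisors_of_ne_zero hy0⟩, ?_⟩
    change y • T.of a • x = 0
    rw [← mul_smul, ← hdy, mul_smul]
    exact congrArg (T.of a • ·) hdx |>.trans (smul_zero _)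
  | add r s hr hs => rw [add_smul]; exact add_mem hr hs
  | smul c r hr =>
    rw [Algebra.smul_def, mul_smul]
    exact Submodule.smul_mem _ (algebraMap F (T.subalg C₀) c) hr

theorem torsion_eq_bot [IsSimpleRing R] [IsNoetherianRing (T.subalg C₀)]
    [Module.Finite (T.subalg C₀) M] : Submodule.torsion (T.subalg C₀) M = ⊥ := by
  obtain ⟨d, hd, hd0⟩ := Submodule.annihilator_top_inter_nonZeroDivisors
    (Submodule.torsion_isTorsion (R := T.subalg C₀) (M := M))
  let N : Submodule R M :=
    { carrier := Submodule.torsion (T.subalg C₀) M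
      add_mem' := add_mem
      zero_mem' := zero_mem _
      smul_mem' := T.smul_mem_torsion }
  have hN : N = ⊥ := N.eq_bot_of_forall_smul_eq_zero (d := (d : R))
    (fun h => nonZeroDivisors.coe_ne_zero ⟨d, hd0⟩ (Subtype.ext h))
    fun x hx => congrArg Subtype.val (Submodule.mem_annihilator.mp hd ⟨x, hx⟩ Submodule.mem_top)
  exact eq_bot_iff.mpr fun x (hx : x ∈ N) => (Submodule.mem_bot R).mp (hN ▸ hx)

end Torsion

end TwistedGroupAlgebra

theorem torsionFree_of_fg_over_commutative_sub_general
    {F A R M : Type*} [Field F]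
    [AddCommGroup A] [Module.Free ℤ A] [Module.Finite ℤ A]
    [Ring R] [Algebra F R] (T : TwistedGroupAlgebra F A R)
    [AddCommGroup M] [Module R M] [Module F M] [IsScalarTower F R M]
    (hcenter : Subalgebra.center F R = ⊥)
    (C C₀ : AddSubgroup A) (hfin : (C₀.addSubgroupOf C).FiniteIndex)
    (hcomm : T.IsCommutativeOn C₀)
    (hfg : T.FGOn C M) :
    T.TorsionFreeOn C M := by
  have := Module.Free.uniqueSums_int A
  have := T.noZeroDivisors
  have := T.isSimpleRing hcenter
  have := T.isMulCommutative_subalg hcomm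
  have := T.isNoetherianRing_subalg C₀
  obtain ⟨S, hS, hCS⟩ := AddSubgroup.exists_finite_subset_add hfin
  have := T.finite_subalg_of_fgOn hS hCS hfg
  intro β hβ m hβm
  refine or_iff_not_imp_left.mpr fun hβ0 => ?_
  simpa [T.torsion_eq_bot] using T.mem_torsion_of_smul_eq_zero hS hCS hβ hβ0 hβm

/-- **Theorem A(ii).** Let `F*A` be a twisted group algebra of a finitely generated free abelian
group `A` over a field `F` whose center is exactly `F`.  Let `C ≤ A` contain a subgroup `C₀` of
finite index with `F*C₀` commutative.  If `M` is a nonzero finitely generated `F*A`-module which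
is finitely generated as an `F*C`-module, then `M` is torsion-free as an `F*C`-module. -/
theorem torsionFree_of_fg_over_commutative_sub
    {F A R M : Type*} [Field F]
    [AddCommGroup A] [Module.Free ℤ A] [Module.Finite ℤ A]
    [Ring R] [Algebra F R] (T : TwistedGroupAlgebra F A R)
    [AddCommGroup M] [Module R M] [Module F M] [IsScalarTower F R M]
    (hcenter : Subalgebra.center F R = ⊥)
    (C C₀ : AddSubgroup A) (hle : C₀ ≤ C) (hfin : (C₀.addSubgroupOf C).FiniteIndex)
    (hcomm : T.IsCommutativeOn C₀)
    [Nontrivial M] [Module.Finite R M]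
    (hfg : T.FGOn C M) :
    T.TorsionFreeOn C M :=
  torsionFree_of_fg_over_commutative_sub_general T hcenter C C₀ hfin hcomm hfg
end

section
/- Let F*C be a commutative twisted group algebra of a free abelian group C of rank r over a field F, sitting inside a twisted group algebra F*A where A is free abelian with basis {x₁,…,x_n} extending a basis {x₁,…,x_r} of C. Let F_S be the quotient field of F*C, let R = F(x₁,…,x_r)[x_{r+1},…,x_n] be the localization of F*A at the nonzero elements of F*C, a crossed product of A/C over F_S with [x̄_i, x̄_j] = q_{ij}, and let V be an R-module with dim_{F_S} V = s finite and positive. Then the s-th exterior power Λ^s(V) over F_S is a one-dimensional module over the crossed product R' which has the same underlying data as R except that q'_{ij} = q_{ij}^s for all r < i, j ≤ n (and q'_{ij} = q_{ij} when 1 ≤ i ≤ r). -/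
/-!
A `σ`-semilinear map `f : M → N` induces a `σ`-semilinear map on exterior powers sending
`v₁ ∧ ⋯ ∧ vₙ` to `f v₁ ∧ ⋯ ∧ f vₙ`; this construction is functorial and turns `c • f` into
`cⁿ • Λⁿf`. Applied to the relation `uᵢ ∘ uⱼ = qᵢⱼ • (uⱼ ∘ uᵢ)` in top degree `s = dim V`,
where `⋀ˢ V` is a line, it gives `Uᵢ ∘ Uⱼ = qᵢⱼˢ • (Uⱼ ∘ Uᵢ)`. The only subtlety is that both
sides must be semilinear for the same ring map, i.e. `σᵢ` and `σⱼ` must commute; this follows by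
evaluating the relation on `d • v` for any nonzero `v`.
-/

open scoped ExteriorAlgebra

/-- `W` viewed as an `R`-module through `τ`, so that `τ`-semilinear maps into `W` are `R`-linear
maps into `RestrictScalarsAlong τ W`. -/
def RestrictScalarsAlong {R S : Type*} [Semiring R] [Semiring S] (_τ : R →+* S) (W : Type*) :
    Type _ :=
  W

namespace RestrictScalarsAlong

variable {R S : Type*} [Semiring R] [Semiring S] (τ : R →+* S) (W : Type*) [AddCommGroup W]
  [Module S W]

instance : AddCommGroup (RestrictScalarsAlong τ W) := ‹AddCommGroup W›

instance : Module R (RestrictScalarsAlong τ W) := Module.compHom W τ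

end RestrictScalarsAlong

section Functoriality

variable {R S T : Type*} [CommRing R] [CommRing S] [CommRing T]
  {M N P : Type*} [AddCommGroup M] [Module R M] [AddCommGroup N] [Module S N]
  [AddCommGroup P] [Module T P]

namespace ExteriorAlgebra

variable {τ : R →+* S}

def ιMultiComp (n : ℕ) (f : M →ₛₗ[τ] N) :
    M [⋀^Fin n]→ₗ[R] RestrictScalarsAlong τ (ExteriorAlgebra S N) where
  toFun v := ιMulti S n (f ∘ v)
  map_update_add' v i x y := by
    simp only [Function.comp_update, map_add]
    exact (ιMulti S n).map_update_add _ i _ _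
  map_update_smul' v i c x := by
    simp only [Function.comp_update, map_smulₛₗ]
    exact (ιMulti S n).map_update_smul _ i _ _
  map_eq_zero_of_eq' v i j hv hij := (ιMulti S n).map_eq_zero_of_eq _ (congrArg f hv) hij

def semilinearMap (f : M →ₛₗ[τ] N) : ExteriorAlgebra R M →ₛₗ[τ] ExteriorAlgebra S N where
  toFun := liftAlternating fun n => ιMultiComp n f
  map_add' := map_add _
  map_smul' := map_smul (liftAlternating (N := RestrictScalarsAlong τ (ExteriorAlgebra S N))
    fun n => ιMultiComp n f)

theorem semilinearMap_ιMulti (f : M →ₛₗ[τ] N) {n : ℕ} (v : Fin n → M) :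
    semilinearMap f (ιMulti R n v) = ιMulti S n (f ∘ v) :=
  liftAlternating_apply_ιMulti (N := RestrictScalarsAlong τ (ExteriorAlgebra S N)) _ v

end ExteriorAlgebra

namespace exteriorPower

variable (n : ℕ) {τ : R →+* S}

theorem le_comap_semilinearMap (f : M →ₛₗ[τ] N) :
    ⋀[R]^n M ≤ (⋀[S]^n N).comap (ExteriorAlgebra.semilinearMap f) := by
  rw [← ExteriorAlgebra.ιMulti_span_fixedDegree, Submodule.span_le]
  rintro _ ⟨v, rfl⟩
  simpa [ExteriorAlgebra.semilinearMap_ιMulti] using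
    ExteriorAlgebra.ιMulti_range S n (Set.mem_range_self (f ∘ v))

def semilinearMap (f : M →ₛₗ[τ] N) : ⋀[R]^n M →ₛₗ[τ] ⋀[S]^n N :=
  (ExteriorAlgebra.semilinearMap f).restrict (le_comap_semilinearMap n f)

theorem semilinearMap_ιMulti (f : M →ₛₗ[τ] N) (v : Fin n → M) :
    semilinearMap n f (ιMulti R n v) = ιMulti S n (f ∘ v) :=
  Subtype.ext (ExteriorAlgebra.semilinearMap_ιMulti f v)

theorem semilinearMap_id : semilinearMap n (LinearMap.id : M →ₗ[R] M) = LinearMap.id :=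
  LinearMap.ext_on_range (ιMulti_span R n M) fun v => semilinearMap_ιMulti n _ v

theorem semilinearMap_comp {τ₂ : S →+* T} {τ₃ : R →+* T} [RingHomCompTriple τ τ₂ τ₃]
    (f : M →ₛₗ[τ] N) (g : N →ₛₗ[τ₂] P) :
    semilinearMap n (g.comp f) = (semilinearMap n g).comp (semilinearMap n f) :=
  LinearMap.ext_on_range (ιMulti_span R n M) fun v => by
    simp only [LinearMap.comp_apply, semilinearMap_ιMulti]
    rfl

theorem semilinearMap_smul (c : S) (f : M →ₛₗ[τ] N) :
    semilinearMap n (c • f) = c ^ n • semilinearMap n f :=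
  LinearMap.ext_on_range (ιMulti_span R n M) fun v => by
    simpa [semilinearMap_ιMulti, Function.comp_def] using
      (ιMulti S n).map_smul_univ (fun _ => c) (f ∘ v)

def semilinearEquiv {τ' : S →+* R} [RingHomInvPair τ τ'] [RingHomInvPair τ' τ]
    (e : M ≃ₛₗ[τ] N) : ⋀[R]^n M ≃ₛₗ[τ] ⋀[S]^n N :=
  .ofLinearMap (semilinearMap n e.toLinearMap) (semilinearMap n e.symm.toLinearMap)
    (by rw [← semilinearMap_comp, e.comp_symm, semilinearMap_id])
    (by rw [← semilinearMap_comp, e.symm_comp, semilinearMap_id])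

end exteriorPower

end Functoriality

theorem LinearMap.ringHom_comm_of_comp_eq_smul {K V : Type*} [Field K] [AddCommGroup V]
    [Module K V] [Nontrivial V] {σ τ : K →+* K} {f : V →ₛₗ[σ] V} {g : V →ₛₗ[τ] V}
    (hf : Function.Injective f) (hg : Function.Injective g) (c : K)
    (hfg : ∀ v, f (g v) = c • g (f v)) (a : K) : σ (τ a) = τ (σ a) := by
  obtain ⟨v, hv⟩ := exists_ne (0 : V)
  have hfgv : f (g v) ≠ 0 := by simpa using hf.ne (hg.ne hv)
  refine smul_left_injective K hfgv ?_
  calc σ (τ a) • f (g v) = f (g (a • v)) := by simp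
    _ = τ (σ a) • f (g v) := by rw [hfg, map_smulₛₗ, map_smulₛₗ, smul_comm, ← hfg]

theorem exteriorPower_one_dim_module_over_power_cocycle_general
    {K : Type*} [Field K] {V : Type*} [AddCommGroup V] [Module K V]
    {m s : ℕ} (hs : 0 < s) [FiniteDimensional K V] (hdim : Module.finrank K V = s)
    (σ : Fin m → (K ≃+* K))
    (u : Fin m → (V ≃+ V))
    (hsemi : ∀ (j : Fin m) (d : K) (v : V), u j (d • v) = σ j d • u j v)
    (q : Fin m → Fin m → Kˣ)
    (hrel : ∀ (i j : Fin m) (v : V), u i (u j v) = (q i j : K) • u j (u i v)) :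
    Module.finrank K (⋀[K]^s V) = 1 ∧
    ∃ U : Fin m → ((⋀[K]^s V) ≃+ (⋀[K]^s V)),
      (∀ (j : Fin m) (d : K) (w : ⋀[K]^s V), U j (d • w) = σ j d • U j w) ∧
      (∀ (j : Fin m) (v : Fin s → V),
        ((U j ⟨ExteriorAlgebra.ιMulti K s v,
            ExteriorAlgebra.ιMulti_range K s (Set.mem_range_self v)⟩ : ⋀[K]^s V)
          : ExteriorAlgebra K V)
          = ExteriorAlgebra.ιMulti K s (fun i => u j (v i))) ∧
      (∀ (i j : Fin m) (w : ⋀[K]^s V), U i (U j w) = ((q i j : K) ^ s) • U j (U i w)) := by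
  have : Nontrivial V := Module.nontrivial_of_finrank_pos (hdim ▸ hs)
  have (j : Fin m) := RingHomInvPair.of_ringEquiv (σ j)
  have (j : Fin m) := RingHomInvPair.of_ringEquiv_symm (σ j)
  let e (j : Fin m) : V ≃ₛₗ[(σ j : K →+* K)] V := { u j with map_smul' := hsemi j }
  refine ⟨by rw [exteriorPower.finrank_eq, hdim, Nat.choose_self],
    fun j => (exteriorPower.semilinearEquiv s (e j)).toAddEquiv,
    fun j => (exteriorPower.semilinearEquiv s (e j)).map_smulₛₗ,
    fun j v => congrArg Subtype.val (exteriorPower.semilinearMap_ιMulti s _ v), fun i j w => ?_⟩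
  have hcomm : (σ i : K →+* K).comp (σ j) = (σ j : K →+* K).comp (σ i) := RingHom.ext fun a =>
    LinearMap.ringHom_comm_of_comp_eq_smul (f := (e i).toLinearMap) (g := (e j).toLinearMap)
      (e i).injective (e j).injective _ (hrel i j) a
  have : RingHomCompTriple (σ j : K →+* K) (σ i) ((σ i : K →+* K).comp (σ j)) := ⟨rfl⟩
  have : RingHomCompTriple (σ i : K →+* K) (σ j) ((σ i : K →+* K).comp (σ j)) := ⟨hcomm.symm⟩
  have hcomp : (e i).toLinearMap.comp (e j).toLinearMap =
      (q i j : K) • (e j).toLinearMap.comp (e i).toLinearMap :=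
    LinearMap.ext (hrel i j)
  have hΛcomp := congrArg (exteriorPower.semilinearMap s) hcomp
  rw [exteriorPower.semilinearMap_smul, exteriorPower.semilinearMap_comp,
    exteriorPower.semilinearMap_comp] at hΛcomp
  exact LinearMap.congr_fun hΛcomp w

/-- **The exterior power step in Lemma 3.1.**  Let `F_S = K` be the quotient field of the
commutative twisted group algebra `F*C`, and let
`R = F(x₁,…,x_r)[x_{r+1},…,x_n]` be the localization of `F*A` at the nonzero elements of
`F*C`, a crossed product of the free abelian group `A/C` (with basis the images of
`x_{r+1}, …, x_n`) over `K` in which `x̄ᵢx̄ⱼ = qᵢⱼ x̄ⱼx̄ᵢ`.  A module `V` over this crossed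
product is precisely a `K`-vector space together with additive automorphisms
`u j` (the actions of the units `x̄ⱼ`, `j = r+1, …, n`, indexed here by `Fin m` with
`m = n - r`) that are semilinear with respect to the conjugation automorphisms
`σ j : K ≃+* K` (`d ↦ x̄ⱼ d x̄ⱼ⁻¹`) and satisfy `uᵢ ∘ uⱼ = qᵢⱼ • (uⱼ ∘ uᵢ)` where the
multiparameters `qᵢⱼ ∈ K^×` are fixed by all the `σ k`.

If `dim_K V = s` is finite and positive, then the `s`-th exterior power `⋀[K]^s V` is
one-dimensional over `K`, and it is a module over the crossed product `R'` which has the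
same data as `R` except that the multiparameters are `q'ᵢⱼ = qᵢⱼ^s` for `r < i, j ≤ n`
(and `q'ᵢⱼ = qᵢⱼ` for `1 ≤ i ≤ r`, i.e. the `K = F(x₁,…,x_r)`-structure is unchanged):
concretely, the maps `U j` induced functorially by the `u j` on `⋀[K]^s V` (sending the
wedge `v₁ ∧ ⋯ ∧ v_s` to `u j v₁ ∧ ⋯ ∧ u j v_s`) are `σ j`-semilinear and satisfy
`Uᵢ ∘ Uⱼ = qᵢⱼ^s • (Uⱼ ∘ Uᵢ)`. -/
theorem exteriorPower_one_dim_module_over_power_cocycle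
    {K : Type*} [Field K] {V : Type*} [AddCommGroup V] [Module K V]
    {m s : ℕ} (hs : 0 < s) [FiniteDimensional K V] (hdim : Module.finrank K V = s)
    (σ : Fin m → (K ≃+* K))
    (u : Fin m → (V ≃+ V))
    (hsemi : ∀ (j : Fin m) (d : K) (v : V), u j (d • v) = σ j d • u j v)
    (q : Fin m → Fin m → Kˣ)
    (hfix : ∀ (k i j : Fin m), σ k (q i j) = q i j)
    (hrel : ∀ (i j : Fin m) (v : V), u i (u j v) = (q i j : K) • u j (u i v)) :
    Module.finrank K (⋀[K]^s V) = 1 ∧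
    ∃ U : Fin m → ((⋀[K]^s V) ≃+ (⋀[K]^s V)),
      (∀ (j : Fin m) (d : K) (w : ⋀[K]^s V), U j (d • w) = σ j d • U j w) ∧
      (∀ (j : Fin m) (v : Fin s → V),
        ((U j ⟨ExteriorAlgebra.ιMulti K s v,
            ExteriorAlgebra.ιMulti_range K s (Set.mem_range_self v)⟩ : ⋀[K]^s V)
          : ExteriorAlgebra K V)
          = ExteriorAlgebra.ιMulti K s (fun i => u j (v i))) ∧
      (∀ (i j : Fin m) (w : ⋀[K]^s V), U i (U j w) = ((q i j : K) ^ s) • U j (U i w)) :=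
  exteriorPower_one_dim_module_over_power_cocycle_general hs hdim σ u hsemi q hrel
end
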